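/- In the Derrida–Retaux model with m := E[N] > 1, for 1 ≤ s ≤ m^{1/a}: (m − 1)·s·F'_{n+1}(s) − a·F_{n+1}(s) ≥ (m·G(F_n(s))/(F_n(s)·s^a)) · ((m − 1)·s·F'_n(s) − a·F_n(s)). -/

import Mathlib

open scoped ENNReal NNReal
open Filter

/-- Convolution of two `PMF`s on `ℕ`: law of the sum of independent variables. -/
noncomputable def pmfConv (μ ν : PMF ℕ) : PMF ℕ := μ.bind fun x => ν.map (x + ·)

/-- Law of the sum of `n` i.i.d. copies of a variable with law `μ`. -/
noncomputable def iidSum (μ : PMF ℕ) : ℕ → PMF ℕ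
  | 0 => PMF.pure 0
  | n + 1 => pmfConv μ (iidSum μ n)

/-- One step of the Derrida–Retaux recursion:
law of `(X^(1) + ⋯ + X^(N) - a)⁺` (truncated ℕ-subtraction is the positive part). -/
noncomputable def drStep (ν : PMF ℕ) (a : ℕ) (μ : PMF ℕ) : PMF ℕ :=
  (ν.bind fun n => iidSum μ n).map fun y => y - a

/-- The Derrida–Retaux sequence of laws: `drSeq ν μ0 a n` is the law of `X_n`. -/
noncomputable def drSeq (ν μ0 : PMF ℕ) (a : ℕ) : ℕ → PMF ℕ
  | 0 => μ0
  | n + 1 => drStep ν a (drSeq ν μ0 a n)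

/-- Mean (expectation) of a `PMF` on `ℕ`, with values in `ℝ≥0∞`. -/
noncomputable def pmfMean (μ : PMF ℕ) : ℝ≥0∞ := ∑' k : ℕ, μ k * k

/-- Moment generating (probability generating) function `s ↦ E[s^X]` of a `PMF` on `ℕ`,
as a real-valued function (the sum of the series when it converges). -/
noncomputable def genFun (μ : PMF ℕ) (s : ℝ) : ℝ := ∑' k : ℕ, (μ k).toReal * s ^ k

/-!
Write `Y = X^(1) + ⋯ + X^(N)`, so that `X_{n+1} = (Y - a)⁺`, `E[s^Y] = G(F_n(s))` and
`E[Y s^Y] = s F_n'(s) G'(F_n(s))`. Chebyshev's inequality `v G'(v) ≥ m G(v)` at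
`v = F_n(s) ≥ 1` gives `F_n(s) E[Y s^Y] ≥ m s F_n'(s) G(F_n(s))`. Truncating `Y` to `(Y - a)⁺`
turns `(m - 1) E[Y s^Y] - m a E[s^Y]` into `s^a ((m - 1) s F_{n+1}'(s) - a F_{n+1}(s))` minus
a correction over `Y < a`, which is nonnegative because `a s^q ≤ a + q (m - 1)` for `q ≤ a` and
`s ≤ m^(1/a)` (Bernoulli). Combining the two gives the bound.

All these expectations exist in `ℝ≥0∞`; the summability and differentiability hypotheses only
serve to identify them with `genFun` and `deriv`, by termwise differentiation of a power series
with nonnegative coefficients.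
-/

open Topology

section PowerSeries

variable {c : ℕ → ℝ} {s x : ℝ}

lemma slope_pow_nonneg (hx : 0 ≤ x) (hxs : x < s) (k : ℕ) : (0 : ℝ) ≤ slope (· ^ k) s x := by
  simp only [slope_def_field]
  exact div_nonneg_of_nonpos (sub_nonpos.2 (pow_le_pow_left₀ hx hxs.le k)) (by linarith)

lemma slope_pow_le (hx : 0 ≤ x) (hxs : x < s) (k : ℕ) : slope (· ^ k) s x ≤ k * s ^ (k - 1) := by
  have h := (le_abs_self _).trans (abs_pow_sub_pow_le s x k)
  rw [abs_of_pos (sub_pos.2 hxs), abs_of_nonneg hx, abs_of_nonneg (hx.trans hxs.le),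
    max_eq_left hxs.le] at h
  rw [slope_def_field, ← neg_div_neg_eq, neg_sub, neg_sub, div_le_iff₀ (sub_pos.2 hxs)]
  linarith

lemma hasSum_slope_tsum (hs : Summable fun k => c k * s ^ k) (hx : Summable fun k => c k * x ^ k) :
    HasSum (fun k => c k * slope (· ^ k) s x) (slope (fun y => ∑' k, c k * y ^ k) s x) := by
  simp only [slope_def_field, mul_div_assoc', mul_sub]
  exact (hx.hasSum.sub hs.hasSum).div_const _

/-- Also on the boundary of the disc of convergence: the left difference quotients at `s` are
bounded termwise by `k s^(k-1)`, and in the limit they dominate every partial sum. -/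
lemma hasSum_deriv_tsum_pow (hc : ∀ k, 0 ≤ c k) (hs : 0 < s)
    (hsum : Summable fun k => c k * s ^ k)
    (hd : DifferentiableAt ℝ (fun y => ∑' k, c k * y ^ k) s) :
    HasSum (fun k => c k * (k * s ^ (k - 1))) (deriv (fun y => ∑' k, c k * y ^ k) s) := by
  set f := fun y => ∑' k, c k * y ^ k
  have hslope : Tendsto (slope f s) (𝓝[<] s) (𝓝 (deriv f s)) :=
    (hasDerivAt_iff_tendsto_slope.mp hd.hasDerivAt).mono_left (nhdsLT_le_nhdsNE s)
  have hterms : ∀ᶠ x in 𝓝[<] s,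
      HasSum (fun k => c k * slope (· ^ k) s x) (slope f s x) ∧ 0 ≤ x ∧ x < s := by
    filter_upwards [Ioo_mem_nhdsLT hs] with x ⟨hx0, hxs⟩
    refine ⟨hasSum_slope_tsum hsum (hsum.of_nonneg_of_le (fun k => ?_) fun k => ?_), hx0.le, hxs⟩
    · exact mul_nonneg (hc k) (pow_nonneg hx0.le k)
    · exact mul_le_mul_of_nonneg_left (pow_le_pow_left₀ hx0.le hxs.le k) (hc k)
  have hnonneg : ∀ k, 0 ≤ c k * (k * s ^ (k - 1)) := fun k => by
    have := hc k; positivity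
  have hpartial : ∀ N, ∑ k ∈ Finset.range N, c k * (k * s ^ (k - 1)) ≤ deriv f s := by
    intro N
    refine le_of_tendsto_of_tendsto
      (tendsto_finsetSum (f := fun k x => c k * slope (· ^ k) s x) _ fun k _ => ?_) hslope ?_
    · exact ((hasDerivAt_iff_tendsto_slope.mp (hasDerivAt_pow k s)).mono_left
        (nhdsLT_le_nhdsNE s)).const_mul (c k)
    · filter_upwards [hterms] with x ⟨hx, hx0, hxs⟩
      exact sum_le_hasSum _ (fun k _ => mul_nonneg (hc k) (slope_pow_nonneg hx0 hxs k)) hx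
  have hS : Summable fun k => c k * (k * s ^ (k - 1)) := summable_of_sum_range_le hnonneg hpartial
  refine hS.hasSum_iff.mpr (le_antisymm (Real.tsum_le_of_sum_range_le hnonneg hpartial) ?_)
  refine le_of_tendsto hslope ?_
  filter_upwards [hterms] with x ⟨hx, hx0, hxs⟩
  exact hasSum_le (fun k => mul_le_mul_of_nonneg_left (slope_pow_le hx0 hxs k) (hc k)) hx
    hS.hasSum

end PowerSeries

lemma ENNReal.mul_add_mul_le_mul_add_mul {a b c d : ℝ≥0∞} (hab : a ≤ b) (hcd : c ≤ d) :
    a * d + b * c ≤ a * c + b * d := by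
  obtain ⟨p, rfl⟩ := exists_add_of_le hab
  obtain ⟨q, rfl⟩ := exists_add_of_le hcd
  calc a * (c + q) + (a + p) * c ≤ a * (c + q) + (a + p) * c + p * q := le_self_add
    _ = a * c + (a + p) * (c + q) := by ring

lemma natCast_mul_pow_le_of_le_rpow {a q : ℕ} (hqa : q ≤ a) {m s : ℝ} (hm : 1 ≤ m) (hs : 0 ≤ s)
    (hsm : s ≤ m ^ (1 / (a : ℝ))) : a * s ^ q ≤ a + q * (m - 1) := by
  rcases Nat.eq_zero_or_pos a with rfl | ha
  · simp [Nat.le_zero.1 hqa]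
  have ha' : (0 : ℝ) < a := by exact_mod_cast ha
  have hpow : s ^ q ≤ m ^ ((q : ℝ) / a) := calc
    s ^ q ≤ (m ^ (1 / (a : ℝ))) ^ q := pow_le_pow_left₀ hs hsm q
    _ = m ^ ((q : ℝ) / a) := by
      rw [← Real.rpow_natCast, ← Real.rpow_mul (by linarith)]
      ring_nf
  have hbern : m ^ ((q : ℝ) / a) ≤ 1 + (q / a) * (m - 1) := by
    simpa using rpow_one_add_le_one_add_mul_self (s := m - 1) (by linarith)
      (p := q / a) (by positivity) (div_le_one_of_le₀ (by exact_mod_cast hqa) ha'.le)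
  calc a * s ^ q ≤ a * (1 + (q / a) * (m - 1)) := by gcongr; exact hpow.trans hbern
    _ = a + q * (m - 1) := by field_simp

lemma natCast_mul_ofReal_pow_le {a q : ℕ} (hqa : q ≤ a) {m s : ℝ} (hm : 1 ≤ m) (hs : 0 ≤ s)
    (hsm : s ≤ m ^ (1 / (a : ℝ))) :
    (a : ℝ≥0∞) * ENNReal.ofReal s ^ q ≤ a + q * ENNReal.ofReal (m - 1) := by
  have := ENNReal.ofReal_le_ofReal (natCast_mul_pow_le_of_le_rpow hqa hm hs hsm)
  rwa [ENNReal.ofReal_add (by positivity) (by nlinarith), ENNReal.ofReal_mul (by positivity),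
    ENNReal.ofReal_mul (by positivity), ENNReal.ofReal_natCast, ENNReal.ofReal_natCast,
    ENNReal.ofReal_pow hs] at this

namespace PMF

variable {α β : Type*}

lemma tsum_bind_mul (μ : PMF α) (g : α → PMF β) (h : β → ℝ≥0∞) :
    ∑' b, μ.bind g b * h b = ∑' a, μ a * ∑' b, g a b * h b := by
  simp only [bind_apply, ← ENNReal.tsum_mul_right, ← ENNReal.tsum_mul_left, mul_assoc]
  exact ENNReal.tsum_comm

lemma tsum_map_mul (μ : PMF α) (f : α → β) (h : β → ℝ≥0∞) :
    ∑' b, μ.map f b * h b = ∑' a, μ a * h (f a) := by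
  rw [PMF.map, tsum_bind_mul]
  congr! with a
  simp [pure_apply]

lemma toReal_tsum_mul_ofReal (μ : PMF α) {g : α → ℝ} (hg : ∀ k, 0 ≤ g k) :
    (∑' k, μ k * ENNReal.ofReal (g k)).toReal = ∑' k, (μ k).toReal * g k := by
  rw [ENNReal.tsum_toReal_eq fun k => ENNReal.mul_ne_top (μ.apply_ne_top k) ENNReal.ofReal_ne_top]
  simp [ENNReal.toReal_ofReal (hg _)]

lemma tsum_mul_ofReal_ne_top (μ : PMF α) {g : α → ℝ} (hg : ∀ k, 0 ≤ g k)
    (h : Summable fun k => (μ k).toReal * g k) : ∑' k, μ k * ENNReal.ofReal (g k) ≠ ⊤ := by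
  have hterm : ∀ k, μ k * ENNReal.ofReal (g k) = ENNReal.ofReal ((μ k).toReal * g k) := fun k => by
    rw [ENNReal.ofReal_mul ENNReal.toReal_nonneg, ENNReal.ofReal_toReal (μ.apply_ne_top k)]
  rw [tsum_congr hterm,
    ← ENNReal.ofReal_tsum_of_nonneg (fun k => mul_nonneg ENNReal.toReal_nonneg (hg k)) h]
  exact ENNReal.ofReal_ne_top

noncomputable def pgf (μ : PMF ℕ) (t : ℝ≥0∞) : ℝ≥0∞ := ∑' k, μ k * t ^ k

/-- `E[X t^X]`, that is `t` times the derivative of `pgf μ` at `t`. -/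
noncomputable def pgfMoment (μ : PMF ℕ) (t : ℝ≥0∞) : ℝ≥0∞ := ∑' k, μ k * (k * t ^ k)

section Algebra

variable (μ ν : PMF ℕ) (t : ℝ≥0∞)

lemma pgf_pmfConv : pgf (pmfConv μ ν) t = pgf μ t * pgf ν t := by
  simp only [pgf, pmfConv, tsum_bind_mul, tsum_map_mul]
  rw [← ENNReal.tsum_mul_right]
  refine tsum_congr fun x => ?_
  rw [← ENNReal.tsum_mul_left, ← ENNReal.tsum_mul_left]
  exact tsum_congr fun y => by ring

lemma pgfMoment_pmfConv :
    pgfMoment (pmfConv μ ν) t = pgfMoment μ t * pgf ν t + pgf μ t * pgfMoment ν t := by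
  simp only [pgfMoment, pgf, pmfConv, tsum_bind_mul, tsum_map_mul]
  rw [← ENNReal.tsum_mul_right, ← ENNReal.tsum_mul_right, ← ENNReal.tsum_add]
  refine tsum_congr fun x => ?_
  rw [← ENNReal.tsum_mul_left, ← ENNReal.tsum_mul_left, ← ENNReal.tsum_mul_left,
    ← ENNReal.tsum_add]
  refine tsum_congr fun y => ?_
  push_cast
  ring

lemma pgf_iidSum (n : ℕ) : pgf (iidSum μ n) t = pgf μ t ^ n := by
  induction n with
  | zero => simp [iidSum, pgf, pure_apply]
  | succ n ih => rw [iidSum, pgf_pmfConv, ih, pow_succ']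

lemma pgf_mul_pgfMoment_iidSum (n : ℕ) :
    pgf μ t * pgfMoment (iidSum μ n) t = n * pgfMoment μ t * pgf μ t ^ n := by
  induction n with
  | zero => simp [iidSum, pgfMoment, pure_apply]
  | succ n ih =>
    rw [iidSum, pgfMoment_pmfConv, pgf_iidSum, mul_add, mul_left_comm _ (pgf μ t), ih]
    push_cast
    ring

lemma pgf_bind_iidSum : pgf (ν.bind (iidSum μ)) t = pgf ν (pgf μ t) := by
  conv_lhs => rw [pgf, tsum_bind_mul]
  exact tsum_congr fun n => by rw [← pgf, pgf_iidSum]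

lemma pgf_mul_pgfMoment_bind_iidSum :
    pgf μ t * pgfMoment (ν.bind (iidSum μ)) t = pgfMoment μ t * pgfMoment ν (pgf μ t) := by
  conv_lhs => rw [pgfMoment, tsum_bind_mul, ← ENNReal.tsum_mul_left]
  rw [pgfMoment.eq_1 ν, ← ENNReal.tsum_mul_left]
  refine tsum_congr fun n => ?_
  rw [← pgfMoment, mul_left_comm, pgf_mul_pgfMoment_iidSum]
  ring

end Algebra

lemma one_le_pgf (μ : PMF ℕ) {t : ℝ≥0∞} (ht : 1 ≤ t) : 1 ≤ pgf μ t := by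
  rw [← μ.tsum_coe]
  exact ENNReal.tsum_le_tsum fun k => le_mul_of_one_le_right' (one_le_pow₀ ht)

/-- Chebyshev's sum inequality: `N - E[N]` and `w^N - w^⌈E[N]⌉` never have opposite signs. -/
lemma pmfMean_mul_pgf_le_pgfMoment (ν : PMF ℕ) {w : ℝ≥0∞} (hw : 1 ≤ w) (hw' : w ≠ ⊤)
    (hν : pmfMean ν ≠ ⊤) : pmfMean ν * pgf ν w ≤ pgfMoment ν w := by
  set M := pmfMean ν
  set c := w ^ ⌈M.toReal⌉₊
  have hc : c ≠ ⊤ := ENNReal.pow_ne_top hw'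
  have key : ∀ x : ℕ, (x : ℝ≥0∞) * c + M * w ^ x ≤ x * w ^ x + M * c := by
    intro x
    rcases le_or_gt M x with h | h
    · have h' : ⌈M.toReal⌉₊ ≤ x := Nat.ceil_le.2 <| by
        simpa using (ENNReal.toReal_le_toReal hν (ENNReal.natCast_ne_top x)).2 h
      have := ENNReal.mul_add_mul_le_mul_add_mul h (pow_le_pow_right₀ hw h')
      rwa [add_comm, add_comm (M * c)] at this
    · have h' : x ≤ ⌈M.toReal⌉₊ := (Nat.lt_ceil.2 <| by
        simpa using (ENNReal.toReal_lt_toReal (ENNReal.natCast_ne_top x) hν).2 h).le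
      exact ENNReal.mul_add_mul_le_mul_add_mul h.le (pow_le_pow_right₀ hw h')
  rw [← ENNReal.add_le_add_iff_right (ENNReal.mul_ne_top hν hc)]
  calc M * pgf ν w + M * c = ∑' x, ν x * (x * c + M * w ^ x) := by
        simp only [mul_add, ENNReal.tsum_add, mul_left_comm (ν _) M, ← mul_assoc (ν _),
          ENNReal.tsum_mul_left, ENNReal.tsum_mul_right]
        rw [add_comm]
        rfl
    _ ≤ ∑' x, ν x * (x * w ^ x + M * c) := ENNReal.tsum_le_tsum fun x => mul_le_mul_right (key x) _
    _ = pgfMoment ν w + M * c := by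
        simp only [mul_add, ENNReal.tsum_add, ENNReal.tsum_mul_right, ν.tsum_coe, one_mul]
        rfl

/-- Termwise this is an equality for `y ≥ a`, and `hbern` with `q = a - y` for `y < a`. -/
lemma pgfMoment_map_sub_lower_bound (ρ : PMF ℕ) (a : ℕ) {t D : ℝ≥0∞}
    (hbern : ∀ q ≤ a, (a : ℝ≥0∞) * t ^ q ≤ a + q * D) :
    D * pgfMoment ρ t + a * t ^ a * pgf (ρ.map (· - a)) t
      ≤ D * t ^ a * pgfMoment (ρ.map (· - a)) t + (D + 1) * a * pgf ρ t := by
  have key : ∀ y : ℕ, D * (y * t ^ y) + a * t ^ a * t ^ (y - a)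
      ≤ D * t ^ a * ((y - a : ℕ) * t ^ (y - a)) + (D + 1) * a * t ^ y := by
    intro y
    rcases le_or_gt a y with h | h
    · obtain ⟨j, rfl⟩ := Nat.exists_eq_add_of_le h
      simp only [Nat.add_sub_cancel_left, pow_add]
      push_cast
      exact le_of_eq (by ring)
    · obtain ⟨q, rfl⟩ := Nat.exists_eq_add_of_le h.le
      simp only [Nat.sub_eq_zero_of_le h.le, pow_zero, Nat.cast_zero, mul_zero,
        zero_add, mul_one]
      push_cast
      calc D * (y * t ^ y) + (y + q) * t ^ (y + q)
          = D * (y * t ^ y) + t ^ y * ((y + q : ℕ) * t ^ q) := by push_cast; ring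
        _ ≤ D * (y * t ^ y) + t ^ y * ((y + q : ℕ) + q * D) := by
          gcongr; exact hbern q (by omega)
        _ = (D + 1) * (y + q) * t ^ y := by push_cast; ring
  simp only [pgf, pgfMoment, tsum_map_mul, ← ENNReal.tsum_mul_left, ← ENNReal.tsum_add]
  refine ENNReal.tsum_le_tsum fun y => ?_
  calc _ = ρ y * (D * (y * t ^ y) + a * t ^ a * t ^ (y - a)) := by ring
    _ ≤ ρ y * (D * t ^ a * ((y - a : ℕ) * t ^ (y - a)) + (D + 1) * a * t ^ y) :=
      mul_le_mul_right (key y) _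
    _ = _ := by ring

section ofReal

variable {s : ℝ}

lemma genFun_eq_toReal_pgf (μ : PMF ℕ) (hs : 0 ≤ s) :
    genFun μ s = (pgf μ (ENNReal.ofReal s)).toReal := by
  simp_rw [pgf, ← ENNReal.ofReal_pow hs]
  exact (toReal_tsum_mul_ofReal μ fun k => pow_nonneg hs k).symm

lemma pgf_ofReal_ne_top (μ : PMF ℕ) (hs : 0 ≤ s) (h : Summable fun k => (μ k).toReal * s ^ k) :
    pgf μ (ENNReal.ofReal s) ≠ ⊤ := by
  simp_rw [pgf, ← ENNReal.ofReal_pow hs]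
  exact tsum_mul_ofReal_ne_top μ (fun k => pow_nonneg hs k) h

lemma genFun_genFun_eq_toReal_pgf (ν μ : PMF ℕ) (hs : 0 ≤ s)
    (hF : pgf μ (ENNReal.ofReal s) ≠ ⊤) :
    genFun ν (genFun μ s) = (pgf ν (pgf μ (ENNReal.ofReal s))).toReal := by
  rw [μ.genFun_eq_toReal_pgf hs, ν.genFun_eq_toReal_pgf ENNReal.toReal_nonneg,
    ENNReal.ofReal_toReal hF]

lemma pgf_pgf_ofReal_ne_top (ν μ : PMF ℕ) (hs : 0 ≤ s) (hF : pgf μ (ENNReal.ofReal s) ≠ ⊤)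
    (h : Summable fun k => (ν k).toReal * genFun μ s ^ k) :
    pgf ν (pgf μ (ENNReal.ofReal s)) ≠ ⊤ := by
  rw [← ENNReal.ofReal_toReal hF, ← μ.genFun_eq_toReal_pgf hs]
  exact ν.pgf_ofReal_ne_top (by rw [μ.genFun_eq_toReal_pgf hs]; positivity) h

lemma hasSum_mul_deriv_genFun (μ : PMF ℕ) (hs : 0 < s)
    (h : Summable fun k => (μ k).toReal * s ^ k) (hd : DifferentiableAt ℝ (genFun μ) s) :
    HasSum (fun k => (μ k).toReal * (k * s ^ k)) (s * deriv (genFun μ) s) := by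
  refine ((hasSum_deriv_tsum_pow (fun k => ENNReal.toReal_nonneg) hs h hd).mul_left s).congr_fun
    fun k => ?_
  rcases k with _ | k
  · simp
  · simp only [Nat.add_sub_cancel, pow_succ]
    ring

lemma pgfMoment_ofReal_eq (μ : PMF ℕ) (hs : 0 < s) :
    pgfMoment μ (ENNReal.ofReal s) = ∑' k, μ k * ENNReal.ofReal (k * s ^ k) := by
  simp_rw [pgfMoment, ENNReal.ofReal_mul (Nat.cast_nonneg _), ENNReal.ofReal_natCast,
    ENNReal.ofReal_pow hs.le]

lemma mul_deriv_genFun_eq_toReal (μ : PMF ℕ) (hs : 0 < s)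
    (h : Summable fun k => (μ k).toReal * s ^ k) (hd : DifferentiableAt ℝ (genFun μ) s) :
    s * deriv (genFun μ) s = (pgfMoment μ (ENNReal.ofReal s)).toReal := by
  rw [pgfMoment_ofReal_eq μ hs, toReal_tsum_mul_ofReal μ fun k => by positivity]
  exact (hasSum_mul_deriv_genFun μ hs h hd).tsum_eq.symm

lemma pgfMoment_ofReal_ne_top (μ : PMF ℕ) (hs : 0 < s)
    (h : Summable fun k => (μ k).toReal * s ^ k) (hd : DifferentiableAt ℝ (genFun μ) s) :
    pgfMoment μ (ENNReal.ofReal s) ≠ ⊤ := by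
  rw [pgfMoment_ofReal_eq μ hs]
  exact tsum_mul_ofReal_ne_top μ (fun k => by positivity)
    (hasSum_mul_deriv_genFun μ hs h hd).summable

end ofReal

lemma toReal_pmfMean (ν : PMF ℕ) : (pmfMean ν).toReal = ∑' k, (ν k).toReal * k := by
  rw [pmfMean, ENNReal.tsum_toReal_eq fun k => ENNReal.mul_ne_top (ν.apply_ne_top k)
    (ENNReal.natCast_ne_top k)]
  simp

/-- With `D = m - 1`, the recursive bound with denominators cleared: `E[Y t^Y]` for
`Y = X^(1) + ⋯ + X^(N)` is squeezed between Chebyshev's inequality and the truncation bound. -/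
lemma drStep_pgfMoment_lower_bound (ν μ : PMF ℕ) (a : ℕ) {t D : ℝ≥0∞} (ht : 1 ≤ t)
    (hF : pgf μ t ≠ ⊤) (hν : pmfMean ν ≠ ⊤) (hbern : ∀ q ≤ a, (a : ℝ≥0∞) * t ^ q ≤ a + q * D) :
    D * pmfMean ν * pgfMoment μ t * pgf ν (pgf μ t) + a * t ^ a * pgf μ t * pgf (drStep ν a μ) t
      ≤ pgf μ t * (D * t ^ a * pgfMoment (drStep ν a μ) t + (D + 1) * a * pgf ν (pgf μ t)) := by
  set ρ := ν.bind (iidSum μ)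
  have hcheb : pmfMean ν * pgfMoment μ t * pgf ν (pgf μ t) ≤ pgf μ t * pgfMoment ρ t := by
    rw [pgf_mul_pgfMoment_bind_iidSum, mul_comm (pmfMean ν), mul_assoc]
    exact mul_le_mul_right (pmfMean_mul_pgf_le_pgfMoment ν (one_le_pgf μ ht) hF hν) _
  have htrunc := pgfMoment_map_sub_lower_bound ρ a hbern
  rw [pgf_bind_iidSum] at htrunc
  calc D * pmfMean ν * pgfMoment μ t * pgf ν (pgf μ t) + a * t ^ a * pgf μ t * pgf (drStep ν a μ) t
      ≤ D * (pgf μ t * pgfMoment ρ t) + a * t ^ a * pgf μ t * pgf (drStep ν a μ) t := by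
        rw [mul_assoc D, mul_assoc D]
        gcongr
    _ = pgf μ t * (D * pgfMoment ρ t + a * t ^ a * pgf (ρ.map (· - a)) t) := by
        rw [drStep]; ring
    _ ≤ _ := mul_le_mul_right htrunc _

end PMF

theorem dr_D_recursive_lower_bound_general (ν μ0 : PMF ℕ) (a : ℕ)
    (m : ℝ) (hm : m = ∑' k : ℕ, (ν k).toReal * k) (hm1 : 1 < m)
    (n : ℕ) (s : ℝ) (hs1 : 1 ≤ s) (hs2 : s ≤ m ^ (1 / (a : ℝ)))
    (hFn : Summable fun k : ℕ => ((drSeq ν μ0 a n) k).toReal * s ^ k)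
    (hFn1 : Summable fun k : ℕ => ((drSeq ν μ0 a (n + 1)) k).toReal * s ^ k)
    (hG : Summable fun k : ℕ => (ν k).toReal * genFun (drSeq ν μ0 a n) s ^ k)
    (hdn : DifferentiableAt ℝ (genFun (drSeq ν μ0 a n)) s)
    (hdn1 : DifferentiableAt ℝ (genFun (drSeq ν μ0 a (n + 1))) s) :
    m * genFun ν (genFun (drSeq ν μ0 a n) s) / (genFun (drSeq ν μ0 a n) s * s ^ a)
        * ((m - 1) * s * deriv (genFun (drSeq ν μ0 a n)) s - a * genFun (drSeq ν μ0 a n) s)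
      ≤ (m - 1) * s * deriv (genFun (drSeq ν μ0 a (n + 1))) s
          - a * genFun (drSeq ν μ0 a (n + 1)) s := by
  set μ := drSeq ν μ0 a n
  have hμ1 : drSeq ν μ0 a (n + 1) = drStep ν a μ := rfl
  rw [hμ1] at hFn1 hdn1 ⊢
  have hs0 : 0 < s := by linarith
  have hF := μ.pgf_ofReal_ne_top hs0.le hFn
  have hF1 := (drStep ν a μ).pgf_ofReal_ne_top hs0.le hFn1
  have hB := μ.pgfMoment_ofReal_ne_top hs0 hFn hdn
  have hB1 := (drStep ν a μ).pgfMoment_ofReal_ne_top hs0 hFn1 hdn1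
  have hM : pmfMean ν ≠ ⊤ :=
    (ENNReal.toReal_pos_iff.1 (by rw [ν.toReal_pmfMean, ← hm]; linarith)).2.ne
  have hH := ν.pgf_pgf_ofReal_ne_top μ hs0.le hF hG
  have hFge : 1 ≤ (μ.pgf (ENNReal.ofReal s)).toReal := by
    simpa using ENNReal.toReal_mono hF (μ.one_le_pgf (ENNReal.one_le_ofReal.2 hs1))
  have key := ENNReal.toReal_mono (by finiteness) (ν.drStep_pgfMoment_lower_bound μ a
    (ENNReal.one_le_ofReal.2 hs1) hF hM fun q hq => natCast_mul_ofReal_pow_le hq hm1.le hs0.le hs2)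
  simp (disch := finiteness) only [ENNReal.toReal_mul, ENNReal.toReal_add, ENNReal.toReal_pow,
    ENNReal.toReal_natCast, ENNReal.toReal_ofReal hs0.le,
    ENNReal.toReal_ofReal (sub_nonneg.2 hm1.le), ENNReal.toReal_one, PMF.toReal_pmfMean,
    ← hm] at key
  rw [ν.genFun_genFun_eq_toReal_pgf μ hs0.le hF, mul_assoc (m - 1) s, mul_assoc (m - 1) s,
    μ.mul_deriv_genFun_eq_toReal hs0 hFn hdn,
    (drStep ν a μ).mul_deriv_genFun_eq_toReal hs0 hFn1 hdn1, μ.genFun_eq_toReal_pgf hs0.le,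
    (drStep ν a μ).genFun_eq_toReal_pgf hs0.le, div_mul_eq_mul_div, div_le_iff₀ (by positivity)]
  linear_combination key

/-- for `1 ≤ s ≤ m^{1/a}` with `m = E[N] > 1`,
`(m−1)sF'_{n+1}(s) − aF_{n+1}(s) ≥ (mG(F_n(s))/(F_n(s)s^a))((m−1)sF'_n(s) − aF_n(s))`. -/
theorem dr_D_recursive_lower_bound (ν μ0 : PMF ℕ) (a : ℕ) (ha : 1 ≤ a) (hν0 : ν 0 = 0)
    (hmsum : Summable fun k : ℕ => (ν k).toReal * k)
    (m : ℝ) (hm : m = ∑' k : ℕ, (ν k).toReal * k) (hm1 : 1 < m)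
    (n : ℕ) (s : ℝ) (hs1 : 1 ≤ s) (hs2 : s ≤ m ^ (1 / (a : ℝ)))
    (hFn : Summable fun k : ℕ => ((drSeq ν μ0 a n) k).toReal * s ^ k)
    (hFn1 : Summable fun k : ℕ => ((drSeq ν μ0 a (n + 1)) k).toReal * s ^ k)
    (hG : Summable fun k : ℕ => (ν k).toReal * genFun (drSeq ν μ0 a n) s ^ k)
    (hdn : DifferentiableAt ℝ (genFun (drSeq ν μ0 a n)) s)
    (hdn1 : DifferentiableAt ℝ (genFun (drSeq ν μ0 a (n + 1))) s) :
    m * genFun ν (genFun (drSeq ν μ0 a n) s) / (genFun (drSeq ν μ0 a n) s * s ^ a)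
        * ((m - 1) * s * deriv (genFun (drSeq ν μ0 a n)) s - a * genFun (drSeq ν μ0 a n) s)
      ≤ (m - 1) * s * deriv (genFun (drSeq ν μ0 a (n + 1))) s
          - a * genFun (drSeq ν μ0 a (n + 1)) s :=
  dr_D_recursive_lower_bound_general ν μ0 a m hm hm1 n s hs1 hs2 hFn hFn1 hG hdn hdn1
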